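/- arXiv:2407.11521 — 2 statements merged into one kernel-verified Lean document; each statement's English description precedes it below -/
import Mathlib

section
/- Let G be a simple graph on n vertices, G* its augmented graph with universal vertex u*, and M* a Moore–Penrose pseudoinverse of L_{G*}. Then the forest index of G satisfies R_f(G) = n·trace(M*) − (n+1)·M*[u*,u*]. -/
open Matrix BigOperators

/-- `M` is a Moore–Penrose pseudoinverse of `L`. -/
def IsMoorePenrose {n : Type*} [Fintype n] (L M : Matrix n n ℝ) : Prop :=
  L * M * L = L ∧ M * L * M = M ∧ (L * M)ᵀ = L * M ∧ (M * L)ᵀ = M * L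

/-- The augmented graph `G*` of `G`: a new universal vertex `none` is joined
to every vertex of `G`. -/
def augment {V : Type*} (G : SimpleGraph V) : SimpleGraph (Option V) :=
  SimpleGraph.fromRel fun x y =>
    (∃ u v, x = some u ∧ y = some v ∧ G.Adj u v) ∨ x = none ∨ y = none

instance augmentAdjDecidable {V : Type*} [Fintype V] [DecidableEq V]
    (G : SimpleGraph V) [DecidableRel G.Adj] : DecidableRel (augment G).Adj :=
  fun x y => decidable_of_iff' _ (SimpleGraph.fromRel_adj _ x y)

/-!
Write `Ω = (L_G + I)⁻¹`. Since `L_{G*} 1 = 0` and `1ᵀ L_{G*} = 0`, the Moore–Penrose identities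
force every row and column of `M` to sum to zero. If `z` is a vector on
`V` with `∑ z = 0`, then `y = Ω z` also sums to zero, so `L_{G*}` maps `y` extended by `0` at `u*`
to `z` extended by `0`; hence `zᵀ M z = yᵀ z = zᵀ Ω z`. Taking `z = e_u - e_v` turns each forest
distance into an entry combination of `M`, and summing over pairs with the zero row sums of `M`
gives `n · tr M - (n + 1) · M[u*, u*]`.
-/

theorem Finset.two_mul_sum_sum_Ioi_of_symm {ι R : Type*} [Fintype ι] [LinearOrder ι]
    [LocallyFiniteOrderTop ι] [LocallyFiniteOrderBot ι] [NonAssocSemiring R] (t : ι → ι → R)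
    (hsymm : ∀ i j, t i j = t j i) (hdiag : ∀ i, t i i = 0) :
    2 * ∑ i, ∑ j ∈ Ioi i, t i j = ∑ i, ∑ j, t i j := by
  simp_rw [Finset.mul_sum, two_mul]
  conv_lhs => enter [2, i, 2, j, 1]; rw [hsymm]
  conv_rhs => rw [Finset.sum_comm]
  rw [sum_sum_Ioi_add_eq_sum_sum_off_diag]
  refine Finset.sum_congr rfl fun i _ ↦ ?_
  rw [Fintype.sum_eq_add_sum_compl i, hdiag, zero_add]

theorem Matrix.sum_sum_apply_sub_sub_add {ι R : Type*} [Fintype ι] [CommRing R]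
    (A : Matrix ι ι R) :
    ∑ i, ∑ j, (A i i - A i j - A j i + A j j) =
      2 * (Fintype.card ι * A.trace - ∑ i, ∑ j, A i j) := by
  simp only [Finset.sum_add_distrib, Finset.sum_sub_distrib, Finset.sum_const, Finset.card_univ,
    nsmul_eq_mul, trace, diag]
  rw [Finset.sum_comm (f := fun i j ↦ A j i), ← Finset.mul_sum]
  ring

theorem Matrix.sum_sum_submatrix_some_some {ι R : Type*} [Fintype ι] [CommRing R]
    {M : Matrix (Option ι) (Option ι) R} (hrow : M *ᵥ (fun _ ↦ 1) = 0)
    (hcol : (fun _ ↦ 1) ᵥ* M = 0) :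
    ∑ i, ∑ j, M.submatrix some some i j = M none none := by
  have hrow' i : ∑ j, M i j = 0 := by simpa [mulVec, dotProduct] using congrFun hrow i
  have hcol' := congrFun hcol none
  simp only [vecMul, dotProduct, one_mul, Fintype.sum_option, Pi.zero_apply] at hcol' hrow'
  have htotal := Finset.sum_eq_zero (s := Finset.univ) fun i _ ↦ hrow' (some i)
  simp only [submatrix_apply, Finset.sum_add_distrib] at htotal ⊢
  linear_combination htotal - hcol'

theorem Option.elim'_zero_dotProduct {ι R : Type*} [Fintype ι] [NonUnitalNonAssocSemiring R]
    (x y : ι → R) : Option.elim' 0 x ⬝ᵥ Option.elim' 0 y = x ⬝ᵥ y := by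
  simp [dotProduct, Fintype.sum_option]

theorem Option.elim'_zero_single_sub_single {ι R : Type*} [DecidableEq ι] [AddGroup R] [One R]
    (u v : ι) :
    Option.elim' 0 (Pi.single u 1 - Pi.single v 1 : ι → R) =
      Pi.single (some u) 1 - Pi.single (some v) 1 := by
  ext (_ | a) <;> simp [Pi.single_apply]

theorem Matrix.single_sub_single_dotProduct_mulVec {ι R : Type*} [Fintype ι] [DecidableEq ι]
    [CommRing R] (A : Matrix ι ι R) (u v : ι) :
    (Pi.single u 1 - Pi.single v 1) ⬝ᵥ (A *ᵥ (Pi.single u 1 - Pi.single v 1)) =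
      A u u - A u v - A v u + A v v := by
  simp only [mulVec_sub, mulVec_single, MulOpposite.op_one, one_smul, dotProduct_sub,
    sub_dotProduct, single_dotProduct, col_apply, one_mul]
  ring

namespace IsMoorePenrose

variable {ι : Type*} [Fintype ι] {L M : Matrix ι ι ℝ}

theorem mulVec_eq_zero (hM : IsMoorePenrose L M) {x : ι → ℝ} (hx : x ᵥ* L = 0) :
    M *ᵥ x = 0 := by
  obtain ⟨-, hMLM, hLM, -⟩ := hM
  rw [← hMLM, Matrix.mul_assoc, ← mulVec_mulVec, ← hLM, mulVec_transpose, ← vecMul_vecMul, hx,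
    zero_vecMul, mulVec_zero]

theorem vecMul_eq_zero (hM : IsMoorePenrose L M) {x : ι → ℝ} (hx : L *ᵥ x = 0) :
    x ᵥ* M = 0 := by
  obtain ⟨-, hMLM, -, hML⟩ := hM
  rw [← hMLM, ← vecMul_vecMul, ← hML, vecMul_transpose, ← mulVec_mulVec, hx, mulVec_zero,
    zero_vecMul]

theorem dotProduct_mulVec_of_mulVec_eq (hM : IsMoorePenrose L M) (hL : L.IsSymm)
    {x z : ι → ℝ} (hx : L *ᵥ x = z) : z ⬝ᵥ (M *ᵥ z) = x ⬝ᵥ z := by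
  obtain ⟨hLML, -⟩ := hM
  subst hx
  nth_rw 1 [← hL.eq, mulVec_transpose]
  rw [← dotProduct_mulVec, mulVec_mulVec, mulVec_mulVec, hLML]

end IsMoorePenrose

namespace SimpleGraph

variable {V R : Type*} [Fintype V] [DecidableEq V] (G : SimpleGraph V) [DecidableRel G.Adj]

theorem lapMatrix_mulVec_apply_eq_sum [NonAssocRing R] (x : V → R) (i : V) :
    (G.lapMatrix R *ᵥ x) i = ∑ j, if G.Adj i j then x i - x j else 0 := by
  simp_rw [lapMatrix_mulVec_apply, degree_eq_sum_if_adj, neighborFinset_eq_filter,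
    Finset.sum_filter, Finset.sum_mul, ite_mul, one_mul, zero_mul, ← Finset.sum_sub_distrib,
    ite_sub_ite, sub_zero]

theorem const_vecMul_lapMatrix_eq_zero [CommRing R] : (fun _ ↦ 1) ᵥ* G.lapMatrix R = 0 := by
  rw [← (G.isSymm_lapMatrix (R := R)).eq, vecMul_transpose, lapMatrix_mulVec_const_eq_zero]

theorem sum_lapMatrix_mulVec [CommRing R] (x : V → R) : ∑ i, (G.lapMatrix R *ᵥ x) i = 0 := by
  calc ∑ i, (G.lapMatrix R *ᵥ x) i = (fun _ ↦ 1) ⬝ᵥ (G.lapMatrix R *ᵥ x) := by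
        simp [dotProduct]
    _ = 0 := by rw [dotProduct_mulVec, const_vecMul_lapMatrix_eq_zero, zero_dotProduct]

theorem isSymm_inv_lapMatrix_add_one [CommRing R] : (G.lapMatrix R + 1)⁻¹.IsSymm :=
  ((G.isSymm_lapMatrix (R := R)).add isSymm_one).inv

theorem isUnit_det_lapMatrix_add_one : IsUnit (G.lapMatrix ℝ + 1).det :=
  (isUnit_iff_isUnit_det _).mp (PosDef.posSemidef_add (posSemidef_lapMatrix ℝ G) PosDef.one).isUnit

end SimpleGraph

section Augment

variable {V : Type*} (G : SimpleGraph V)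

@[simp]
theorem augment_adj_some_some {a b : V} : (augment G).Adj (some a) (some b) ↔ G.Adj a b := by
  simp only [augment, SimpleGraph.fromRel_adj, ne_eq, Option.some.injEq, reduceCtorEq, or_false,
    exists_and_left, exists_eq_left']
  exact ⟨fun h ↦ h.2.elim id (·.symm), fun h ↦ ⟨h.ne, .inl h⟩⟩

@[simp]
theorem augment_adj_some_none (a : V) : (augment G).Adj (some a) none := by
  simp [augment]

@[simp]
theorem augment_adj_none_some (a : V) : (augment G).Adj none (some a) :=
  (augment_adj_some_none G a).symm

variable [Fintype V] [DecidableEq V] [DecidableRel G.Adj] {R : Type*} [NonAssocRing R]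

theorem augment_lapMatrix_mulVec_elim'_zero_some (x : V → R) (a : V) :
    ((augment G).lapMatrix R *ᵥ Option.elim' 0 x) (some a) = ((G.lapMatrix R + 1) *ᵥ x) a := by
  simp [SimpleGraph.lapMatrix_mulVec_apply_eq_sum, Fintype.sum_option, add_mulVec, add_comm]

theorem augment_lapMatrix_mulVec_elim'_zero_none (x : V → R) :
    ((augment G).lapMatrix R *ᵥ Option.elim' 0 x) none = -∑ a, x a := by
  simp [SimpleGraph.lapMatrix_mulVec_apply_eq_sum, Fintype.sum_option]

end Augment

variable {V : Type*} [Fintype V] [DecidableEq V] {G : SimpleGraph V} [DecidableRel G.Adj]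
  {M : Matrix (Option V) (Option V) ℝ}

theorem IsMoorePenrose.augment_dotProduct_mulVec_elim'_zero
    (hM : IsMoorePenrose ((augment G).lapMatrix ℝ) M) {z : V → ℝ} (hz : ∑ a, z a = 0) :
    Option.elim' 0 z ⬝ᵥ (M *ᵥ Option.elim' 0 z) = z ⬝ᵥ ((G.lapMatrix ℝ + 1)⁻¹ *ᵥ z) := by
  set y := (G.lapMatrix ℝ + 1)⁻¹ *ᵥ z
  have hy : (G.lapMatrix ℝ + 1) *ᵥ y = z := by
    rw [mulVec_mulVec, mul_nonsing_inv _ G.isUnit_det_lapMatrix_add_one, one_mulVec]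
  have hy_sum : ∑ a, y a = 0 := by
    simpa [← hy, add_mulVec, Finset.sum_add_distrib, G.sum_lapMatrix_mulVec] using hz
  have hext : (augment G).lapMatrix ℝ *ᵥ Option.elim' 0 y = Option.elim' 0 z := by
    ext (_ | a)
    · simp [augment_lapMatrix_mulVec_elim'_zero_none, hy_sum]
    · simp [augment_lapMatrix_mulVec_elim'_zero_some, hy]
  rw [hM.dotProduct_mulVec_of_mulVec_eq ((augment G).isSymm_lapMatrix ℝ) hext,
    Option.elim'_zero_dotProduct, dotProduct_comm]

theorem IsMoorePenrose.augment_apply_sub_sub_add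
    (hM : IsMoorePenrose ((augment G).lapMatrix ℝ) M) (u v : V) :
    M (some u) (some u) - M (some u) (some v) - M (some v) (some u) + M (some v) (some v) =
      (G.lapMatrix ℝ + 1)⁻¹ u u - (G.lapMatrix ℝ + 1)⁻¹ u v - (G.lapMatrix ℝ + 1)⁻¹ v u +
        (G.lapMatrix ℝ + 1)⁻¹ v v := by
  have hsum : ∑ a, (Pi.single u 1 - Pi.single v 1 : V → ℝ) a = 0 := by
    simp [Finset.sum_sub_distrib]
  rw [← single_sub_single_dotProduct_mulVec, ← single_sub_single_dotProduct_mulVec,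
    ← hM.augment_dotProduct_mulVec_elim'_zero hsum, Option.elim'_zero_single_sub_single]

theorem forest_index_eq_augmented_trace {n : ℕ} (G : SimpleGraph (Fin n))
    [DecidableRel G.Adj] (M : Matrix (Option (Fin n)) (Option (Fin n)) ℝ)
    (hM : IsMoorePenrose ((augment G).lapMatrix ℝ) M) :
    ∑ u : Fin n, ∑ v ∈ Finset.Ioi u,
        ((G.lapMatrix ℝ + 1)⁻¹ u u - 2 * (G.lapMatrix ℝ + 1)⁻¹ u v +
          (G.lapMatrix ℝ + 1)⁻¹ v v) =
      (n : ℝ) * M.trace - (n + 1) * M none none := by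
  set A := M.submatrix some some
  have hforest u v : (G.lapMatrix ℝ + 1)⁻¹ u u - 2 * (G.lapMatrix ℝ + 1)⁻¹ u v +
      (G.lapMatrix ℝ + 1)⁻¹ v v = A u u - A u v - A v u + A v v := by
    simp only [A, submatrix_apply]
    rw [hM.augment_apply_sub_sub_add, G.isSymm_inv_lapMatrix_add_one.apply u v]
    ring
  have hA : ∑ u, ∑ v, A u v = M none none :=
    sum_sum_submatrix_some_some (hM.mulVec_eq_zero (augment G).const_vecMul_lapMatrix_eq_zero)
      (hM.vecMul_eq_zero (augment G).lapMatrix_mulVec_const_eq_zero)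
  have htrace : M.trace = M none none + A.trace := by simp [A, trace, Fintype.sum_option]
  have hdouble := Finset.two_mul_sum_sum_Ioi_of_symm (fun u v ↦ A u u - A u v - A v u + A v v)
    (fun _ _ ↦ by ring) (fun _ ↦ by ring)
  rw [sum_sum_apply_sub_sub_add, hA, Fintype.card_fin] at hdouble
  simp_rw [hforest, htrace]
  linarith
end

section
/- Let G be a connected simple graph, {a,b} an edge of G such that G' = G − {a,b} is also connected, M a Moore–Penrose pseudoinverse of L_G, and r = M[a,a] − 2·M[a,b] + M[b,b] the effective resistance of the edge. Then r ≠ 1, and the matrix N = M + (1/(1 − r))·M(e_a − e_b)(e_a − e_b)ᵀM is a Moore–Penrose pseudoinverse of L_{G'} = L_G − (e_a − e_b)(e_a − e_b)ᵀ. -/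
open Matrix BigOperators

instance deleteEdgeAdjDecidable {V : Type*} [DecidableEq V]
    (G : SimpleGraph V) [DecidableRel G.Adj] (a b : V) :
    DecidableRel (G.deleteEdges {s(a, b)}).Adj := fun x y =>
  decidable_of_iff (G.Adj x y ∧ ¬s(x, y) = s(a, b)) (by simp)

/-!
Write `w = e_a - e_b`, so that `L_{G'} = L_G - w wᵀ`. Since `a` and `b` are adjacent, `w` is
orthogonal to `ker L_G`, hence lies in the range of `L_G`, on which `L_G M` is the identity.
If `r = wᵀ M w` were `1`, then `M w` would lie in `ker L_{G'}`; as `G'` is connected this kernel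
consists of constant vectors, which are orthogonal to `w`, contradicting `wᵀ M w = 1`.
Once `L_G M w = w` and `wᵀ M L_G = wᵀ`, the Sherman–Morrison computation gives
`L_{G'} N = L_G M` and `N L_{G'} = M L_G`, from which the four Moore–Penrose identities follow.
-/

namespace Matrix

variable {n R : Type*} [Fintype n]

theorem eq_of_mulVec_one_eq_of_offDiag_eq [DecidableEq n] [NonAssocRing R] {A B : Matrix n n R}
    (hsum : A *ᵥ 1 = B *ᵥ 1) (hoff : ∀ i j, i ≠ j → A i j = B i j) : A = B := by
  ext i j
  obtain rfl | hij := eq_or_ne i j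
  · have hrow := congrFun hsum i
    simp only [mulVec, dotProduct, Pi.one_apply, mul_one] at hrow
    rw [← Finset.add_sum_erase _ _ (Finset.mem_univ i),
      ← Finset.add_sum_erase _ _ (Finset.mem_univ i),
      Finset.sum_congr rfl fun j hj => hoff i j (Finset.ne_of_mem_erase hj).symm] at hrow
    exact add_right_cancel hrow
  · exact hoff i j hij

theorem dotProduct_mulVec_ne_one [CommRing R] [Nontrivial R] {L M : Matrix n n R} {u v : n → R}
    (hu : (L * M) *ᵥ u = u) (hker : ∀ x, (L - vecMulVec u v) *ᵥ x = 0 → v ⬝ᵥ x = 0) :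
    v ⬝ᵥ M *ᵥ u ≠ 1 := by
  intro hr
  apply one_ne_zero (α := R)
  rw [← hr]
  apply hker
  rw [sub_mulVec, mulVec_mulVec, hu, vecMulVec_mulVec, hr, MulOpposite.op_one, one_smul, sub_self]

end Matrix

theorem single_sub_single_dotProduct {n R : Type*} [Fintype n] [DecidableEq n] [Ring R]
    (a b : n) (x : n → R) : (Pi.single a 1 - Pi.single b 1 : n → R) ⬝ᵥ x = x a - x b := by
  rw [sub_dotProduct, single_dotProduct, single_dotProduct, one_mul, one_mul]

namespace IsMoorePenrose

variable {n : Type*} [Fintype n] {L M : Matrix n n ℝ}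

theorem transpose (hM : IsMoorePenrose L M) : IsMoorePenrose Lᵀ Mᵀ := by
  obtain ⟨h₁, h₂, h₃, h₄⟩ := hM
  refine ⟨?_, ?_, ?_, ?_⟩
  · rw [← transpose_mul, ← transpose_mul, ← Matrix.mul_assoc, h₁]
  · rw [← transpose_mul, ← transpose_mul, ← Matrix.mul_assoc, h₂]
  · rw [← transpose_mul, h₄]; exact h₄
  · rw [← transpose_mul, h₃]; exact h₃

theorem unique {M' : Matrix n n ℝ} (hM : IsMoorePenrose L M) (hM' : IsMoorePenrose L M') :
    M = M' := by
  obtain ⟨h₁, h₂, h₃, h₄⟩ := hM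
  obtain ⟨h₁', h₂', h₃', h₄'⟩ := hM'
  have hLM : L * M = L * M' :=
    calc L * M = (L * M') * (L * M) := by rw [← Matrix.mul_assoc, h₁']
    _ = (L * M * (L * M'))ᵀ := by rw [transpose_mul, h₃, h₃']
    _ = L * M' := by rw [← Matrix.mul_assoc, h₁, h₃']
  have hML : M * L = M' * L :=
    calc M * L = (M * L) * (M' * L) := by rw [Matrix.mul_assoc, ← Matrix.mul_assoc L, h₁']
    _ = (M' * L * (M * L))ᵀ := by rw [transpose_mul, h₄, h₄']
    _ = M' * L := by rw [Matrix.mul_assoc, ← Matrix.mul_assoc L, h₁, h₄']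
  rw [← h₂, hML, Matrix.mul_assoc, hLM, ← Matrix.mul_assoc, h₂']

theorem isSymm (hM : IsMoorePenrose L M) (hL : L.IsSymm) : M.IsSymm := by
  have := hM.transpose
  rw [hL.eq] at this
  exact this.unique hM

theorem mul_mulVec_eq_self_of_forall_vecMul_eq_zero (hM : IsMoorePenrose L M) {w : n → ℝ}
    (hw : ∀ x, x ᵥ* L = 0 → w ⬝ᵥ x = 0) : (L * M) *ᵥ w = w := by
  obtain ⟨h₁, -, h₃, -⟩ := hM
  set P := L * M
  have hPP : P * P = P := by rw [← Matrix.mul_assoc, h₁]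
  -- `x` lies in the left kernel of `L` and is orthogonal to `P *ᵥ w`, hence to itself.
  set x := w - P *ᵥ w
  have hPx : P *ᵥ x = 0 := by rw [mulVec_sub, mulVec_mulVec, hPP, sub_self]
  have hxL : x ᵥ* L = 0 := by
    rw [sub_vecMul, ← vecMul_transpose, h₃, vecMul_vecMul, h₁, sub_self]
  have hx : x ⬝ᵥ x = 0 := by
    rw [sub_dotProduct, hw x hxL, ← vecMul_transpose, h₃, ← dotProduct_mulVec, hPx,
      dotProduct_zero, sub_zero]
  rw [← sub_eq_zero.mp (dotProduct_self_eq_zero.mp hx)]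

theorem sub_vecMulVec (hM : IsMoorePenrose L M) {u v : n → ℝ} (hu : (L * M) *ᵥ u = u)
    (hv : v ᵥ* (M * L) = v) (hr : v ⬝ᵥ M *ᵥ u ≠ 1) :
    IsMoorePenrose (L - vecMulVec u v)
      (M + (1 / (1 - v ⬝ᵥ M *ᵥ u)) • (M * vecMulVec u v * M)) := by
  obtain ⟨h₁, h₂, h₃, h₄⟩ := hM
  set r := v ⬝ᵥ M *ᵥ u
  set s := 1 / (1 - r)
  set P := vecMulVec u v
  have hLMP : L * M * P = P := by rw [mul_vecMulVec, hu]
  have hPML : P * M * L = P := by rw [Matrix.mul_assoc, vecMulVec_mul, hv]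
  have hPMP : P * M * P = r • P := by
    rw [vecMulVec_mul, vecMulVec_mul_vecMulVec, ← dotProduct_mulVec, vecMulVec_smul]
  have hs : s * (1 - r) = 1 := one_div_mul_cancel (sub_ne_zero.mpr hr.symm)
  have hleft : (L - P) * (M + s • (M * P * M)) = L * M := by
    have hLMPM : L * (M * P * M) = P * M := by
      rw [← Matrix.mul_assoc, ← Matrix.mul_assoc, hLMP]
    have hPMPM : P * (M * P * M) = r • (P * M) := by
      rw [← Matrix.mul_assoc, ← Matrix.mul_assoc, hPMP, smul_mul]
    calc (L - P) * (M + s • (M * P * M)) = L * M + (s * (1 - r) - 1) • (P * M) := by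
          rw [sub_mul, mul_add, mul_add, Matrix.mul_smul, Matrix.mul_smul, hLMPM, hPMPM,
            smul_smul]
          module
    _ = L * M := by rw [hs, sub_self, zero_smul, add_zero]
  have hright : (M + s • (M * P * M)) * (L - P) = M * L := by
    have hMPML : M * P * M * L = M * P := by
      rw [Matrix.mul_assoc, Matrix.mul_assoc, ← Matrix.mul_assoc P, hPML]
    have hMPMP : M * P * M * P = r • (M * P) := by
      rw [Matrix.mul_assoc, Matrix.mul_assoc, ← Matrix.mul_assoc P, hPMP, Matrix.mul_smul]
    calc (M + s • (M * P * M)) * (L - P) = M * L + (s * (1 - r) - 1) • (M * P) := by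
          rw [add_mul, mul_sub, mul_sub, smul_mul, smul_mul, hMPML, hMPMP, smul_smul]
          module
    _ = M * L := by rw [hs, sub_self, zero_smul, add_zero]
  refine ⟨?_, ?_, ?_, ?_⟩
  · rw [hleft, Matrix.mul_sub, h₁, hLMP]
  · rw [hright, Matrix.mul_add, Matrix.mul_smul, h₂, ← Matrix.mul_assoc, ← Matrix.mul_assoc,
      h₂]
  · rw [hleft, h₃]
  · rw [hright, h₄]

end IsMoorePenrose

namespace SimpleGraph

variable {V : Type*} [Fintype V] [DecidableEq V] (G : SimpleGraph V) [DecidableRel G.Adj]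

theorem lapMatrix_apply_of_ne {R : Type*} [AddGroupWithOne R] {i j : V} (hij : i ≠ j) :
    G.lapMatrix R i j = -G.adjMatrix R i j := by
  simp [lapMatrix, degMatrix, diagonal_apply_ne _ hij]

theorem lapMatrix_deleteEdges_singleton {R : Type*} [Ring R] {a b : V} (hab : G.Adj a b) :
    (G.deleteEdges {s(a, b)}).lapMatrix R =
      G.lapMatrix R -
        vecMulVec (Pi.single a 1 - Pi.single b 1) (Pi.single a 1 - Pi.single b 1) := by
  apply Matrix.eq_of_mulVec_one_eq_of_offDiag_eq
  · rw [sub_mulVec, vecMulVec_mulVec, Pi.one_def, lapMatrix_mulVec_const_eq_zero,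
      lapMatrix_mulVec_const_eq_zero]
    simp [dotProduct, Finset.sum_sub_distrib]
  · intro i j hij
    rw [Matrix.sub_apply, lapMatrix_apply_of_ne _ hij, lapMatrix_apply_of_ne _ hij,
      vecMulVec_apply]
    by_cases ha : i = a <;> by_cases hb : i = b <;> by_cases ha' : j = a <;>
      by_cases hb' : j = b <;> simp_all [adjMatrix_apply, hab.ne, hab.symm]

variable {G}

theorem Reachable.single_sub_single_dotProduct_eq_zero {a b : V} (h : G.Reachable a b)
    {x : V → ℝ} (hx : G.lapMatrix ℝ *ᵥ x = 0) :
    (Pi.single a 1 - Pi.single b 1 : V → ℝ) ⬝ᵥ x = 0 := by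
  rw [single_sub_single_dotProduct, G.lapMatrix_mulVec_eq_zero_iff_forall_reachable.mp hx a b h,
    sub_self]

end SimpleGraph

theorem sherman_morrison_update_non_bridge_general {V : Type*} [Fintype V] [DecidableEq V]
    (G : SimpleGraph V) [DecidableRel G.Adj]
    (a b : V) (hab : G.Adj a b) (hG' : (G.deleteEdges {s(a, b)}).Connected)
    (M : Matrix V V ℝ) (hM : IsMoorePenrose (G.lapMatrix ℝ) M) :
    M a a - 2 * M a b + M b b ≠ 1 ∧
      IsMoorePenrose ((G.deleteEdges {s(a, b)}).lapMatrix ℝ)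
        (M + (1 / (1 - (M a a - 2 * M a b + M b b))) •
          (M * Matrix.vecMulVec ((Pi.single a 1 - Pi.single b 1 : V → ℝ))
            ((Pi.single a 1 - Pi.single b 1 : V → ℝ)) * M)) := by
  set w : V → ℝ := Pi.single a 1 - Pi.single b 1
  have hL := G.isSymm_lapMatrix (R := ℝ)
  have hMsymm := hM.isSymm hL
  have hr : w ⬝ᵥ M *ᵥ w = M a a - 2 * M a b + M b b := by
    rw [single_sub_single_dotProduct, mulVec_sub, mulVec_single_one, mulVec_single_one]
    simp only [Pi.sub_apply, col_apply]
    rw [← hMsymm.apply a b]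
    ring
  have hw : (G.lapMatrix ℝ * M) *ᵥ w = w := hM.mul_mulVec_eq_self_of_forall_vecMul_eq_zero
    fun x hx => hab.reachable.single_sub_single_dotProduct_eq_zero <| by
      rwa [← mulVec_transpose, hL.eq] at hx
  have hw' : w ᵥ* (M * G.lapMatrix ℝ) = w := by
    rw [← mulVec_transpose, transpose_mul, hL.eq, hMsymm.eq, hw]
  have hr1 : w ⬝ᵥ M *ᵥ w ≠ 1 := Matrix.dotProduct_mulVec_ne_one hw fun x hx =>
    (hG'.preconnected a b).single_sub_single_dotProduct_eq_zero <| by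
      rwa [G.lapMatrix_deleteEdges_singleton hab]
  rw [← hr, G.lapMatrix_deleteEdges_singleton hab]
  exact ⟨hr1, hM.sub_vecMulVec hw hw' hr1⟩

theorem sherman_morrison_update_non_bridge {V : Type*} [Fintype V] [DecidableEq V]
    (G : SimpleGraph V) [DecidableRel G.Adj] (hG : G.Connected)
    (a b : V) (hab : G.Adj a b) (hG' : (G.deleteEdges {s(a, b)}).Connected)
    (M : Matrix V V ℝ) (hM : IsMoorePenrose (G.lapMatrix ℝ) M) :
    M a a - 2 * M a b + M b b ≠ 1 ∧
      IsMoorePenrose ((G.deleteEdges {s(a, b)}).lapMatrix ℝ)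
        (M + (1 / (1 - (M a a - 2 * M a b + M b b))) •
          (M * Matrix.vecMulVec ((Pi.single a 1 - Pi.single b 1 : V → ℝ))
            ((Pi.single a 1 - Pi.single b 1 : V → ℝ)) * M)) :=
  sherman_morrison_update_non_bridge_general G a b hab hG' M hM
end
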